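/- Multivariate sharpness: let X ∈ ℝ^p be square-integrable with E[XX'] nonsingular and Y square-integrable, and let d ∈ ℝ^p \ {0}. Then sup over couplings (X̃,Ỹ) of d'E[XX']^{-1}E[X̃Ỹ] equals E[F_{X_d}^{-1}(U) F_Y^{-1}(U)] where X_d := d'E[XX']^{-1}X and U ~ Uniform[0,1]; i.e., knowledge of the joint distribution of X beyond the law of the scalar X_d carries no additional information for this supremum. -/

import Mathlib

open MeasureTheory Set Filter

/-- Generalized inverse (quantile function) of the cdf of a measure `μ` on `ℝ`. -/
noncomputable def qf (μ : Measure ℝ) (t : ℝ) : ℝ :=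
  sInf {x | t ≤ (μ (Set.Iic x)).toReal}

/-- Second-moment matrix `E[X Xᵀ]` of a distribution `μ` on `ℝ^p`. -/
noncomputable def momMat {p : ℕ} (μ : Measure (Fin p → ℝ)) : Matrix (Fin p) (Fin p) ℝ :=
  Matrix.of fun i j => ∫ x, x i * x j ∂μ

/-!
Put `c = dᵀ E[XXᵀ]⁻¹`, so that `X_d = c ⬝ᵥ X` and the objective of a coupling is `E[X_d Ỹ]`,
which only sees the law of `(X_d, Ỹ)`: a coupling of `law X_d` with `law Y`.

Upper bound (Cambanis–Simons–Stout): by the layer-cake formula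
`xy = ∬ (𝟙{0 ≤ s} - 𝟙{x ≤ s}) (𝟙{0 ≤ t} - 𝟙{y ≤ t}) ds dt`, for fixed marginals `E[XY]` is
monotone in the joint cdf (Hoeffding), and the Fréchet bound `P(X ≤ s, Y ≤ t) ≤ min (F s) (G t)`
is attained by the comonotone coupling `(F⁻¹(U), G⁻¹(U))`.

Attainment: the comonotone coupling of `law X_d` with `law Y` lifts to a coupling of `law X` with
`law Y` by drawing `X̃ ∼ law X` and then `Ỹ` from the conditional law of the comonotone coupling
given `X_d = c ⬝ᵥ X̃`.
-/

open ProbabilityTheory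
open scoped ENNReal

lemma isProbabilityMeasure_of_fst_eq {A B : Type*} [MeasurableSpace A] [MeasurableSpace B]
    {π : Measure (A × B)} {μ : Measure A} [IsProbabilityMeasure μ] (h : π.fst = μ) :
    IsProbabilityMeasure π :=
  ⟨by rw [← Measure.fst_univ, h, measure_univ]⟩

lemma integrable_fst_mul_snd {A B : Type*} [MeasurableSpace A] [MeasurableSpace B]
    {π : Measure (A × B)} {f : A → ℝ} {g : B → ℝ} (hf : MemLp f 2 π.fst) (hg : MemLp g 2 π.snd) :
    Integrable (fun q => f q.1 * g q.2) π :=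
  (hf.comp_of_map measurable_fst.aemeasurable).integrable_mul
    (hg.comp_of_map measurable_snd.aemeasurable)

lemma fst_map_prodMap {A B C D : Type*} [MeasurableSpace A] [MeasurableSpace B]
    [MeasurableSpace C] [MeasurableSpace D] (π : Measure (A × B)) {f : A → C} {g : B → D}
    (hf : Measurable f) (hg : Measurable g) : (π.map (Prod.map f g)).fst = π.fst.map f := by
  rw [Measure.fst, Measure.map_map measurable_fst (hf.prodMap hg), Measure.fst,
    Measure.map_map hf measurable_fst]
  rfl

lemma snd_map_prodMap {A B C D : Type*} [MeasurableSpace A] [MeasurableSpace B]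
    [MeasurableSpace C] [MeasurableSpace D] (π : Measure (A × B)) {f : A → C} {g : B → D}
    (hf : Measurable f) (hg : Measurable g) : (π.map (Prod.map f g)).snd = π.snd.map g := by
  rw [Measure.snd, Measure.map_map measurable_snd (hf.prodMap hg), Measure.snd,
    Measure.map_map hg measurable_snd]
  rfl

lemma volume_Iic_inter_Ioo_zero_one {c : ℝ} (h0 : 0 ≤ c) (h1 : c ≤ 1) :
    volume (Iic c ∩ Ioo 0 1) = ENNReal.ofReal c := by
  rcases h1.lt_or_eq with h1 | rfl
  · have : Iic c ∩ Ioo 0 1 = Ioc 0 c := by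
      ext t
      simp only [mem_inter_iff, mem_Iic, mem_Ioo, mem_Ioc]
      constructor
      · rintro ⟨htc, ht0, -⟩; exact ⟨ht0, htc⟩
      · rintro ⟨ht0, htc⟩; exact ⟨htc, ht0, htc.trans_lt h1⟩
    rw [this, Real.volume_Ioc, sub_zero]
  · rw [inter_eq_right.2 fun t ht => ht.2.le, Real.volume_Ioo, sub_zero]

section Quantile

lemma bddBelow_setOf_le_cdf (μ : Measure ℝ) {t : ℝ} (ht : 0 < t) :
    BddBelow {x | t ≤ cdf μ x} := by
  obtain ⟨y, hy⟩ := ((tendsto_cdf_atBot μ).eventually (eventually_lt_nhds ht)).exists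
  exact ⟨y, fun z hz => le_of_not_gt fun hzy => (hz.trans (monotone_cdf μ hzy.le)).not_gt hy⟩

lemma nonempty_setOf_le_cdf (μ : Measure ℝ) {t : ℝ} (ht : t < 1) :
    {x | t ≤ cdf μ x}.Nonempty := by
  obtain ⟨x, hx⟩ := ((tendsto_cdf_atTop μ).eventually (eventually_gt_nhds ht)).exists
  exact ⟨x, hx.le⟩

variable (μ : Measure ℝ) [IsProbabilityMeasure μ]

lemma qf_eq_sInf_cdf (t : ℝ) : qf μ t = sInf {x | t ≤ cdf μ x} := by
  simp only [qf, cdf_eq_real, measureReal_def]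

lemma qf_le_iff {t : ℝ} (ht : t ∈ Ioo 0 1) (x : ℝ) : qf μ t ≤ x ↔ t ≤ cdf μ x := by
  rw [qf_eq_sInf_cdf]
  refine ⟨fun h => ?_, fun h => csInf_le (bddBelow_setOf_le_cdf μ ht.1) h⟩
  have hright : ∀ y ∈ Ioi x, t ≤ cdf μ y := fun y hy => by
    obtain ⟨z, hz, hzy⟩ :=
      (csInf_lt_iff (bddBelow_setOf_le_cdf μ ht.1) (nonempty_setOf_le_cdf μ ht.2)).1
        (h.trans_lt hy)
    exact hz.trans (monotone_cdf μ hzy.le)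
  exact ge_of_tendsto (((cdf μ).right_continuous x).mono Ioi_subset_Ici_self)
    (eventually_nhdsWithin_of_forall hright)

lemma monotoneOn_qf : MonotoneOn (qf μ) (Ioo 0 1) := fun _ ha _ hb hab =>
  (qf_le_iff μ ha _).2 (hab.trans ((qf_le_iff μ hb _).1 le_rfl))

lemma aemeasurable_qf : AEMeasurable (qf μ) (volume.restrict (Ioo 0 1)) :=
  aemeasurable_restrict_of_monotoneOn measurableSet_Ioo (monotoneOn_qf μ)

lemma map_qf_uniform : (volume.restrict (Ioo 0 1)).map (qf μ) = μ := by
  refine Measure.ext_of_Iic _ _ fun x => ?_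
  have hpre : qf μ ⁻¹' Iic x ∩ Ioo 0 1 = Iic (cdf μ x) ∩ Ioo 0 1 := by
    ext t
    simp only [mem_inter_iff, mem_preimage, mem_Iic]
    exact ⟨fun h => ⟨(qf_le_iff μ h.2 x).1 h.1, h.2⟩, fun h => ⟨(qf_le_iff μ h.2 x).2 h.1, h.2⟩⟩
  rw [Measure.map_apply_of_aemeasurable (aemeasurable_qf μ) measurableSet_Iic,
    Measure.restrict_apply' measurableSet_Ioo, hpre,
    volume_Iic_inter_Ioo_zero_one (cdf_nonneg μ x) (cdf_le_one μ x), ofReal_cdf]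

end Quantile

section Hoeffding

noncomputable def layerStep (a s : ℝ) : ℝ :=
  (if 0 ≤ s then 1 else 0) - if a ≤ s then 1 else 0

lemma layerStep_of_nonneg {a : ℝ} (ha : 0 ≤ a) : layerStep a = (Ico 0 a).indicator 1 := by
  funext s
  simp only [layerStep, indicator_apply, mem_Ico, Pi.one_apply]
  split_ifs <;> grind

lemma layerStep_of_neg {a : ℝ} (ha : a < 0) :
    layerStep a = fun s => -(Ico a 0).indicator 1 s := by
  funext s
  simp only [layerStep, indicator_apply, mem_Ico, Pi.one_apply]
  split_ifs <;> grind

lemma measurable_layerStep : Measurable fun p : ℝ × ℝ => layerStep p.1 p.2 := by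
  unfold layerStep
  exact (measurable_const.ite (measurableSet_le measurable_const measurable_snd)
    measurable_const).sub
      (measurable_const.ite (measurableSet_le measurable_fst measurable_snd) measurable_const)

lemma integrable_layerStep (a : ℝ) : Integrable (layerStep a) := by
  rcases le_or_gt 0 a with ha | ha
  · rw [layerStep_of_nonneg ha]
    exact IntegrableOn.integrable_indicator (integrableOn_const measure_Ico_lt_top.ne)
      measurableSet_Ico
  · rw [layerStep_of_neg ha]
    exact (IntegrableOn.integrable_indicator (integrableOn_const measure_Ico_lt_top.ne)
      measurableSet_Ico).neg

lemma integral_layerStep (a : ℝ) : ∫ s, layerStep a s = a := by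
  rcases le_or_gt 0 a with ha | ha
  · rw [layerStep_of_nonneg ha, integral_indicator_one measurableSet_Ico, measureReal_def,
      Real.volume_Ico, sub_zero, ENNReal.toReal_ofReal ha]
  · rw [layerStep_of_neg ha, integral_neg, integral_indicator_one measurableSet_Ico,
      measureReal_def, Real.volume_Ico, zero_sub, ENNReal.toReal_ofReal (by linarith), neg_neg]

lemma integral_abs_layerStep (a : ℝ) : ∫ s, |layerStep a s| = |a| := by
  rcases le_or_gt 0 a with ha | ha
  · have hpos : ∀ s, 0 ≤ layerStep a s := fun s => by
      rw [layerStep_of_nonneg ha]; exact indicator_nonneg (fun _ _ => zero_le_one) s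
    simp_rw [abs_of_nonneg (hpos _), integral_layerStep, abs_of_nonneg ha]
  · have hneg : ∀ s, layerStep a s ≤ 0 := fun s => by
      rw [layerStep_of_neg ha, neg_nonpos]; exact indicator_nonneg (fun _ _ => zero_le_one) s
    simp_rw [abs_of_nonpos (hneg _), integral_neg, integral_layerStep, abs_of_neg ha]

variable {π : Measure (ℝ × ℝ)}

lemma integral_layerStep_mul_layerStep [IsFiniteMeasure π] (s t : ℝ) :
    ∫ q, layerStep q.1 s * layerStep q.2 t ∂π =
      π.real (Iic s ×ˢ Iic t) - (if 0 ≤ s then 1 else 0) * π.real (Prod.snd ⁻¹' Iic t)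
        - (if 0 ≤ t then 1 else 0) * π.real (Prod.fst ⁻¹' Iic s)
        + π.real univ * ((if 0 ≤ s then 1 else 0) * (if 0 ≤ t then 1 else 0)) := by
  have hbox : MeasurableSet (Iic s ×ˢ Iic t) := measurableSet_Iic.prod measurableSet_Iic
  have hfst : MeasurableSet (Prod.fst ⁻¹' Iic s : Set (ℝ × ℝ)) := measurable_fst measurableSet_Iic
  have hsnd : MeasurableSet (Prod.snd ⁻¹' Iic t : Set (ℝ × ℝ)) := measurable_snd measurableSet_Iic
  have hexpand : (fun q : ℝ × ℝ => layerStep q.1 s * layerStep q.2 t) = fun q =>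
      (Iic s ×ˢ Iic t).indicator 1 q
        - (if 0 ≤ s then 1 else 0) * (Prod.snd ⁻¹' Iic t).indicator 1 q
        - (if 0 ≤ t then 1 else 0) * (Prod.fst ⁻¹' Iic s).indicator 1 q
        + (if 0 ≤ s then 1 else 0) * (if 0 ≤ t then 1 else 0) := by
    funext q
    simp only [layerStep, indicator_apply, mem_prod, mem_Iic, Pi.one_apply]
    split_ifs <;> simp_all
  have hint : ∀ {A : Set (ℝ × ℝ)}, MeasurableSet A → Integrable (A.indicator 1) π :=
    fun hA => (integrable_const (1 : ℝ)).indicator hA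
  have h1 := hint hbox
  have h2 := (hint hsnd).const_mul (if 0 ≤ s then 1 else 0)
  have h3 := (hint hfst).const_mul (if 0 ≤ t then 1 else 0)
  rw [hexpand, integral_add, integral_sub, integral_sub, integral_const_mul, integral_const_mul,
    integral_indicator_one hbox, integral_indicator_one hfst, integral_indicator_one hsnd,
    integral_const, smul_eq_mul]
  exacts [h1, h2, h1.sub h2, h3, (h1.sub h2).sub h3, integrable_const _]

lemma integrable_layerStep_mul_layerStep [SFinite π] (hπ : Integrable (fun q => q.1 * q.2) π) :
    Integrable (fun z : (ℝ × ℝ) × (ℝ × ℝ) => layerStep z.1.1 z.2.1 * layerStep z.1.2 z.2.2)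
      (π.prod volume) := by
  have hmeas : Measurable fun z : (ℝ × ℝ) × (ℝ × ℝ) =>
      layerStep z.1.1 z.2.1 * layerStep z.1.2 z.2.2 :=
    (measurable_layerStep.comp (measurable_fst.fst.prodMk measurable_snd.fst)).mul
      (measurable_layerStep.comp (measurable_fst.snd.prodMk measurable_snd.snd))
  rw [integrable_prod_iff hmeas.aestronglyMeasurable]
  refine ⟨ae_of_all _ fun q => ?_, ?_⟩
  · rw [Measure.volume_eq_prod]
    exact (integrable_layerStep q.1).mul_prod (integrable_layerStep q.2)
  · have hnorm : ∀ q : ℝ × ℝ,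
        ∫ st : ℝ × ℝ, ‖layerStep q.1 st.1 * layerStep q.2 st.2‖ = ‖q.1 * q.2‖ := by
      intro q
      simp_rw [norm_mul, Real.norm_eq_abs]
      rw [Measure.volume_eq_prod, integral_prod_mul (fun s => |layerStep q.1 s|)
        (fun t => |layerStep q.2 t|), integral_abs_layerStep, integral_abs_layerStep]
    simpa only [hnorm] using hπ.norm

lemma integral_integral_layerStep_mul_layerStep [SFinite π]
    (hπ : Integrable (fun q => q.1 * q.2) π) :
    ∫ st : ℝ × ℝ, ∫ q, layerStep q.1 st.1 * layerStep q.2 st.2 ∂π = ∫ q, q.1 * q.2 ∂π := by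
  rw [← integral_integral_swap (integrable_layerStep_mul_layerStep hπ)]
  congr 1 with q
  rw [Measure.volume_eq_prod, integral_prod_mul (layerStep q.1) (layerStep q.2),
    integral_layerStep, integral_layerStep]

lemma integral_mul_le_of_measure_Iic_prod_Iic_le {π' : Measure (ℝ × ℝ)} [IsFiniteMeasure π]
    [IsFiniteMeasure π'] (hfst : π.fst = π'.fst) (hsnd : π.snd = π'.snd)
    (hπ : Integrable (fun q => q.1 * q.2) π) (hπ' : Integrable (fun q => q.1 * q.2) π')
    (hle : ∀ s t, π (Iic s ×ˢ Iic t) ≤ π' (Iic s ×ˢ Iic t)) :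
    ∫ q, q.1 * q.2 ∂π ≤ ∫ q, q.1 * q.2 ∂π' := by
  rw [← integral_integral_layerStep_mul_layerStep hπ,
    ← integral_integral_layerStep_mul_layerStep hπ']
  refine integral_mono (integrable_layerStep_mul_layerStep hπ).integral_prod_right
    (integrable_layerStep_mul_layerStep hπ').integral_prod_right fun st => ?_
  have hfst' : ∀ s, π.real (Prod.fst ⁻¹' Iic s) = π'.real (Prod.fst ⁻¹' Iic s) := fun s => by
    rw [measureReal_def, measureReal_def, ← Measure.fst_apply measurableSet_Iic,
      ← Measure.fst_apply measurableSet_Iic, hfst]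
  have hsnd' : ∀ t, π.real (Prod.snd ⁻¹' Iic t) = π'.real (Prod.snd ⁻¹' Iic t) := fun t => by
    rw [measureReal_def, measureReal_def, ← Measure.snd_apply measurableSet_Iic,
      ← Measure.snd_apply measurableSet_Iic, hsnd]
  have hmass : π.real univ = π'.real univ := by
    rw [measureReal_def, measureReal_def, ← Measure.fst_univ, hfst, Measure.fst_univ]
  have hbox := ENNReal.toReal_mono (measure_ne_top π' _) (hle st.1 st.2)
  rw [integral_layerStep_mul_layerStep, integral_layerStep_mul_layerStep, hfst', hsnd', hmass]
  simp only [measureReal_def]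
  linarith

end Hoeffding

-- `qf` takes junk `sInf` values at `0` and `1`, hence the open interval.
noncomputable def comonotoneCoupling (α β : Measure ℝ) : Measure (ℝ × ℝ) :=
  (volume.restrict (Ioo 0 1)).map fun t => (qf α t, qf β t)

namespace comonotoneCoupling

variable (α β : Measure ℝ) [IsProbabilityMeasure α] [IsProbabilityMeasure β]

lemma aemeasurable_qf_prod :
    AEMeasurable (fun t => (qf α t, qf β t)) (volume.restrict (Ioo 0 1)) :=
  (aemeasurable_qf α).prodMk (aemeasurable_qf β)

lemma fst : (comonotoneCoupling α β).fst = α := by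
  rw [Measure.fst, comonotoneCoupling,
    AEMeasurable.map_map_of_aemeasurable measurable_fst.aemeasurable (aemeasurable_qf_prod α β)]
  exact map_qf_uniform α

lemma snd : (comonotoneCoupling α β).snd = β := by
  rw [Measure.snd, comonotoneCoupling,
    AEMeasurable.map_map_of_aemeasurable measurable_snd.aemeasurable (aemeasurable_qf_prod α β)]
  exact map_qf_uniform β

instance : IsProbabilityMeasure (comonotoneCoupling α β) :=
  isProbabilityMeasure_of_fst_eq (fst α β)

lemma apply_Iic_prod_Iic (x y : ℝ) :
    comonotoneCoupling α β (Iic x ×ˢ Iic y) = min (α (Iic x)) (β (Iic y)) := by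
  have hpre : (fun t => (qf α t, qf β t)) ⁻¹' (Iic x ×ˢ Iic y) ∩ Ioo 0 1
      = Iic (min (cdf α x) (cdf β y)) ∩ Ioo 0 1 := by
    ext t
    simp only [mem_inter_iff, mem_preimage, mem_prod, mem_Iic, le_min_iff]
    exact ⟨fun h => ⟨⟨(qf_le_iff α h.2 x).1 h.1.1, (qf_le_iff β h.2 y).1 h.1.2⟩, h.2⟩,
      fun h => ⟨⟨(qf_le_iff α h.2 x).2 h.1.1, (qf_le_iff β h.2 y).2 h.1.2⟩, h.2⟩⟩
  rw [comonotoneCoupling, Measure.map_apply_of_aemeasurable (aemeasurable_qf_prod α β)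
    (measurableSet_Iic.prod measurableSet_Iic), Measure.restrict_apply' measurableSet_Ioo, hpre,
    volume_Iic_inter_Ioo_zero_one (le_min (cdf_nonneg α x) (cdf_nonneg β y))
      ((min_le_left _ _).trans (cdf_le_one α x)), ENNReal.ofReal_min, ofReal_cdf, ofReal_cdf]

lemma integral_mul :
    ∫ q, q.1 * q.2 ∂comonotoneCoupling α β = ∫ t in Ioc (0:ℝ) 1, qf α t * qf β t := by
  rw [comonotoneCoupling, integral_map (f := fun q : ℝ × ℝ => q.1 * q.2)
    (aemeasurable_qf_prod α β) (by fun_prop), integral_Ioc_eq_integral_Ioo]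

end comonotoneCoupling

lemma measure_Iic_prod_Iic_le_comonotoneCoupling {α β : Measure ℝ} [IsProbabilityMeasure α]
    [IsProbabilityMeasure β] {π : Measure (ℝ × ℝ)} (hfst : π.fst = α) (hsnd : π.snd = β)
    (s t : ℝ) : π (Iic s ×ˢ Iic t) ≤ comonotoneCoupling α β (Iic s ×ˢ Iic t) := by
  rw [comonotoneCoupling.apply_Iic_prod_Iic, ← hfst, ← hsnd,
    Measure.fst_apply measurableSet_Iic, Measure.snd_apply measurableSet_Iic]
  exact le_min (measure_mono fun q hq => hq.1) (measure_mono fun q hq => hq.2)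

theorem integral_mul_le_comonotoneCoupling {α β : Measure ℝ} [IsProbabilityMeasure α]
    [IsProbabilityMeasure β] {π : Measure (ℝ × ℝ)} (hfst : π.fst = α) (hsnd : π.snd = β)
    (hα : MemLp id 2 α) (hβ : MemLp id 2 β) :
    ∫ q, q.1 * q.2 ∂π ≤ ∫ q, q.1 * q.2 ∂comonotoneCoupling α β := by
  have := isProbabilityMeasure_of_fst_eq hfst
  refine integral_mul_le_of_measure_Iic_prod_Iic_le
    (by rw [hfst, comonotoneCoupling.fst]) (by rw [hsnd, comonotoneCoupling.snd])
    (integrable_fst_mul_snd (f := id) (g := id) (hfst ▸ hα) (hsnd ▸ hβ))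
    (integrable_fst_mul_snd (f := id) (g := id) (by rwa [comonotoneCoupling.fst])
      (by rwa [comonotoneCoupling.snd]))
    (measure_Iic_prod_Iic_le_comonotoneCoupling hfst hsnd)

lemma map_prodMap_compProd_comap {Ω α β : Type*} [MeasurableSpace Ω] [MeasurableSpace α]
    [MeasurableSpace β] (μ : Measure Ω) [SFinite μ] {T : Ω → α} (hT : Measurable T)
    (η : Kernel α β) [IsSFiniteKernel η] :
    (μ ⊗ₘ η.comap T hT).map (Prod.map T id) = μ.map T ⊗ₘ η := by
  ext s hs
  rw [Measure.map_apply (hT.prodMap measurable_id) hs, Measure.compProd_apply hs,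
    Measure.compProd_apply ((hT.prodMap measurable_id) hs), lintegral_map _ hT]
  · rfl
  · exact η.measurable_kernel_prodMk_left hs

lemma exists_fst_eq_map_prodMap_eq {Ω α β : Type*} [MeasurableSpace Ω] [MeasurableSpace α]
    [MeasurableSpace β] [StandardBorelSpace β] [Nonempty β]
    (μ : Measure Ω) [IsFiniteMeasure μ] {T : Ω → α} (hT : Measurable T)
    (γ : Measure (α × β)) [IsFiniteMeasure γ] (hγ : γ.fst = μ.map T) :
    ∃ π : Measure (Ω × β), π.fst = μ ∧ π.map (Prod.map T id) = γ := by
  refine ⟨μ ⊗ₘ γ.condKernel.comap T hT, Measure.fst_compProd _ _, ?_⟩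
  rw [map_prodMap_compProd_comap μ hT, ← hγ, γ.disintegrate]

section DotProduct

variable {ι : Type*} [Fintype ι]

lemma memLp_dotProduct {μ : Measure (ι → ℝ)} {r : ℝ≥0∞} (hμ : MemLp id r μ) (c : ι → ℝ) :
    MemLp (fun x => c ⬝ᵥ x) r μ :=
  memLp_finsetSum _ fun i _ => (hμ.eval i).const_mul (c i)

lemma dotProduct_integral_mul {π : Measure ((ι → ℝ) × ℝ)} (c : ι → ℝ)
    (hint : ∀ i, Integrable (fun q => q.1 i * q.2) π) :
    c ⬝ᵥ (fun i => ∫ q, q.1 i * q.2 ∂π) = ∫ q, (c ⬝ᵥ q.1) * q.2 ∂π := by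
  simp_rw [dotProduct, ← integral_const_mul]
  rw [← integral_finsetSum _ fun i _ => (hint i).const_mul (c i)]
  simp_rw [Finset.sum_mul, mul_assoc]

theorem isGreatest_dotProduct_integral_mul (μ : Measure (ι → ℝ)) (ν : Measure ℝ)
    [IsProbabilityMeasure μ] [IsProbabilityMeasure ν] (hμ : MemLp id 2 μ) (hν : MemLp id 2 ν)
    (c : ι → ℝ) :
    IsGreatest {v : ℝ | ∃ π : Measure ((ι → ℝ) × ℝ),
        π.fst = μ ∧ π.snd = ν ∧ (∀ i, Integrable (fun q => q.1 i * q.2) π) ∧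
        v = c ⬝ᵥ (fun i => ∫ q, q.1 i * q.2 ∂π)}
      (∫ t in Ioc (0:ℝ) 1, qf (μ.map fun x => c ⬝ᵥ x) t * qf ν t) := by
  set T : (ι → ℝ) → ℝ := fun x => c ⬝ᵥ x
  have hT : Measurable T := (continuous_const.dotProduct continuous_id).measurable
  have hTid : Measurable (Prod.map T (id : ℝ → ℝ)) := hT.prodMap measurable_id
  have : IsProbabilityMeasure (μ.map T) := Measure.isProbabilityMeasure_map hT.aemeasurable
  have hα : MemLp id 2 (μ.map T) :=
    (memLp_map_measure_iff aestronglyMeasurable_id hT.aemeasurable).2 (memLp_dotProduct hμ c)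
  have hvalue : ∀ π : Measure ((ι → ℝ) × ℝ), (∀ i, Integrable (fun q => q.1 i * q.2) π) →
      c ⬝ᵥ (fun i => ∫ q, q.1 i * q.2 ∂π) = ∫ q, q.1 * q.2 ∂(π.map (Prod.map T id)) := by
    intro π hint
    rw [dotProduct_integral_mul c hint, integral_map hTid.aemeasurable (by fun_prop)]
    rfl
  constructor
  · obtain ⟨π, hπfst, hπmap⟩ :=
      exists_fst_eq_map_prodMap_eq μ hT (comonotoneCoupling (μ.map T) ν)
        (comonotoneCoupling.fst _ ν)
    have hπsnd : π.snd = ν := by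
      rw [← Measure.map_id (μ := π.snd), ← snd_map_prodMap π hT measurable_id, hπmap,
        comonotoneCoupling.snd]
    have hint : ∀ i, Integrable (fun q => q.1 i * q.2) π := fun i =>
      integrable_fst_mul_snd (f := fun x => x i) (g := id) (hπfst ▸ hμ.eval i) (hπsnd ▸ hν)
    refine ⟨π, hπfst, hπsnd, hint, ?_⟩
    rw [hvalue π hint, hπmap, comonotoneCoupling.integral_mul]
  · rintro v ⟨π, hπfst, hπsnd, hint, rfl⟩
    rw [hvalue π hint, ← comonotoneCoupling.integral_mul]
    exact integral_mul_le_comonotoneCoupling (by rw [fst_map_prodMap π hT measurable_id, hπfst])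
      (by rw [snd_map_prodMap π hT measurable_id, hπsnd, Measure.map_id]) hα hν

end DotProduct

theorem stmt_10_general {p : ℕ} (μ : Measure (Fin p → ℝ)) (ν : Measure ℝ)
    [IsProbabilityMeasure μ] [IsProbabilityMeasure ν]
    (hμ2 : Integrable (fun x => ‖x‖ ^ 2) μ) (hν2 : Integrable (fun y => y ^ 2) ν)
    (d : Fin p → ℝ) :
    IsGreatest {v : ℝ | ∃ π : Measure ((Fin p → ℝ) × ℝ),
        π.fst = μ ∧ π.snd = ν ∧ (∀ i, Integrable (fun q => q.1 i * q.2) π) ∧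
        v = dotProduct d
              ((momMat μ)⁻¹.mulVec (fun i => ∫ q, q.1 i * q.2 ∂π))}
      (∫ t in Set.Ioc (0:ℝ) 1,
        qf (Measure.map (fun x => dotProduct d ((momMat μ)⁻¹.mulVec x)) μ) t
          * qf ν t) := by
  simp_rw [Matrix.dotProduct_mulVec]
  exact isGreatest_dotProduct_integral_mul μ ν
    ((memLp_two_iff_integrable_sq_norm aestronglyMeasurable_id).2 hμ2)
    ((memLp_two_iff_integrable_sq aestronglyMeasurable_id).2 hν2) _

/-- Multivariate sharpness: the supremum over couplings of `dᵀ E[XXᵀ]⁻¹ E[X̃Ỹ]` equals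
`E[F_{X_d}⁻¹(U) F_Y⁻¹(U)]` with `X_d = dᵀE[XXᵀ]⁻¹X`, and it is attained: only the scalar
law of `X_d` matters. -/
theorem stmt_10 {p : ℕ} (μ : Measure (Fin p → ℝ)) (ν : Measure ℝ)
    [IsProbabilityMeasure μ] [IsProbabilityMeasure ν]
    (hμ2 : Integrable (fun x => ‖x‖ ^ 2) μ) (hν2 : Integrable (fun y => y ^ 2) ν)
    (hM : IsUnit (momMat μ).det) (d : Fin p → ℝ) (hd : d ≠ 0) :
    IsGreatest {v : ℝ | ∃ π : Measure ((Fin p → ℝ) × ℝ),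
        π.fst = μ ∧ π.snd = ν ∧ (∀ i, Integrable (fun q => q.1 i * q.2) π) ∧
        v = dotProduct d
              ((momMat μ)⁻¹.mulVec (fun i => ∫ q, q.1 i * q.2 ∂π))}
      (∫ t in Set.Ioc (0:ℝ) 1,
        qf (Measure.map (fun x => dotProduct d ((momMat μ)⁻¹.mulVec x)) μ) t
          * qf ν t) :=
  stmt_10_general μ ν hμ2 hν2 d
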